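/- Assume lim_{ξ → +∞} (Σ_{k=1}^{T} ∫_0^ξ f(k, t) dt) / ξ^2 = 0, and that γ_k := liminf_{ξ → 0^+} (∫_0^ξ f(k, t) dt) / ξ^2 > 0 for every k ∈ {1, ..., T}. Then for every real α > (2 / min_{k ∈ {1,...,T}} γ_k) · sin^2(π / (2(T+1))), there exists a function u : {0, 1, ..., T+1} → ℝ with u(0) = u(T+1) = 0 and u(k) > 0 for all k ∈ {1, ..., T}, such that -(u(k+1) - 2u(k) + u(k-1)) = α f(k, u(k)) for all k ∈ {1, ..., T}. -/

import Mathlib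

/-!
Solutions are critical points of the energy
`E(u) = ½ ∑ₖ (u(k+1) - u(k))² - α ∑ₖ Fₖ(u(k))` on sequences with `u(0) = u(T+1) = 0`, where
`Fₖ` is a primitive of `f(k, ·)`. Since `∑ₖ Fₖ` grows subquadratically, the discrete Poincaré
inequality makes `E` coercive, so `E` has a global minimiser. The liminf condition gives
`Fₖ(ξ) > c ξ²` for small `ξ > 0`, with `α c > λ₁ / 2`, where `λ₁ = 4 sin²(π / (2(T+1)))` is the
first eigenvalue of `-Δ²`, with eigenvector `φ(k) = sin(kπ / (T+1))`. Hence `E(sφ) < 0` for small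
`s > 0` and the minimiser is non-zero. By the Euler–Lagrange equation `-Δ²u = α f(k, u) ≥ 0` it is
concave, so the discrete strong minimum principle makes it positive.
-/

open Real Filter
open Finset Topology

section Sequences

lemma sum_range_mul_sub_eq (u w : ℕ → ℝ) (n : ℕ) :
    ∑ k ∈ range (n + 1), (u (k + 1) - u k) * (w (k + 1) - w k)
      = ∑ k ∈ Icc 1 n, w k * (2 * u k - u (k + 1) - u (k - 1))
        + (u (n + 1) - u n) * w (n + 1) - (u 1 - u 0) * w 0 := by
  induction n with
  | zero => simp; ring
  | succ n ih =>
    rw [sum_range_succ, ih, sum_Icc_succ_top (by omega), Nat.add_sub_cancel]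
    ring

lemma sum_range_mul_sub_eq_of_boundary (u : ℕ → ℝ) {w : ℕ → ℝ} {n : ℕ} (h0 : w 0 = 0)
    (hn : w (n + 1) = 0) :
    ∑ k ∈ range (n + 1), (u (k + 1) - u k) * (w (k + 1) - w k)
      = ∑ k ∈ Icc 1 n, w k * (2 * u k - u (k + 1) - u (k - 1)) := by
  rw [sum_range_mul_sub_eq, h0, hn]
  ring

lemma sq_le_mul_sum_sq_sub {u : ℕ → ℝ} (h0 : u 0 = 0) {m n : ℕ} (hmn : m ≤ n) :
    u m ^ 2 ≤ n * ∑ k ∈ range n, (u (k + 1) - u k) ^ 2 := by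
  have hm : u m = ∑ k ∈ range m, (u (k + 1) - u k) := by rw [sum_range_sub, h0, sub_zero]
  calc u m ^ 2 ≤ m * ∑ k ∈ range m, (u (k + 1) - u k) ^ 2 := by
        simpa [hm] using sq_sum_le_card_mul_sum_sq (s := range m) (f := fun k => u (k + 1) - u k)
    _ ≤ n * ∑ k ∈ range n, (u (k + 1) - u k) ^ 2 := by
        gcongr

variable {u : ℕ → ℝ} {n : ℕ}

/-- Discrete minimum principle: at the first minimiser, concavity fails unless the minimum is
attained on the boundary. -/
lemma nonneg_of_concave (h0 : u 0 = 0) (hn : u (n + 1) = 0)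
    (hconc : ∀ k ∈ Icc 1 n, u (k + 1) + u (k - 1) ≤ 2 * u k) {k : ℕ} (hk : k ≤ n + 1) :
    0 ≤ u k := by
  classical
  have hP : ∃ i, i ≤ n + 1 ∧ ∀ l ≤ n + 1, u i ≤ u l := by
    obtain ⟨i, hi, hmin⟩ := (range (n + 2)).exists_min_image u nonempty_range_add_one
    exact ⟨i, by simp at hi; omega, fun l hl => hmin l (by simp; omega)⟩
  obtain ⟨hi, hmin⟩ := Nat.find_spec hP
  by_contra! hneg
  have hi0 : Nat.find hP ≠ 0 := fun h => by linarith [h ▸ hmin k hk]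
  have hin : Nat.find hP ≠ n + 1 := fun h => by linarith [h ▸ hmin k hk]
  have hprev : u (Nat.find hP) < u (Nat.find hP - 1) := by
    have := Nat.find_min hP (show Nat.find hP - 1 < Nat.find hP by omega)
    push Not at this
    obtain ⟨l, hl, hlt⟩ := this (by omega)
    exact (hmin l hl).trans_lt hlt
  have := hconc (Nat.find hP) (mem_Icc.2 ⟨by omega, by omega⟩)
  linarith [hmin (Nat.find hP + 1) (by omega)]

lemma pos_of_concave (h0 : u 0 = 0) (hn : u (n + 1) = 0)
    (hconc : ∀ k ∈ Icc 1 n, u (k + 1) + u (k - 1) ≤ 2 * u k) (hne : ∃ k ∈ Icc 1 n, u k ≠ 0) :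
    ∀ k ∈ Icc 1 n, 0 < u k := by
  have hnonneg : ∀ k ≤ n + 1, 0 ≤ u k := fun k hk => nonneg_of_concave h0 hn hconc hk
  have spread : ∀ i ∈ Icc 1 n, u i = 0 → u (i + 1) = 0 ∧ u (i - 1) = 0 := by
    intro i hi hi0
    have := hconc i hi
    rw [mem_Icc] at hi
    have := hnonneg (i + 1) (by omega)
    have := hnonneg (i - 1) (by omega)
    constructor <;> linarith
  intro j hj
  by_contra! hj0
  have hzero : u j = 0 := le_antisymm hj0 (hnonneg j (by simp at hj; omega))
  rw [mem_Icc] at hj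
  have up : ∀ i, j ≤ i → i ≤ n + 1 → u i = 0 := by
    intro i hji
    induction i, hji using Nat.le_induction with
    | base => exact fun _ => hzero
    | succ i hji ih => exact fun hi => (spread i (by simp; omega) (ih (by omega))).1
  have down : ∀ i ≤ j, u i = 0 := by
    intro i hij
    induction hij using Nat.decreasingInduction with
    | self => exact hzero
    | of_succ i hi ih => simpa using (spread (i + 1) (by simp; omega) ih).2
  obtain ⟨k, hk, hk0⟩ := hne
  rw [mem_Icc] at hk
  rcases le_total j k with h | h
  · exact hk0 (up k h (by omega))
  · exact hk0 (down k h)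

end Sequences

noncomputable section

section Primitive

/-- Extending `g` by `g 0` to the negative axis makes the primitive `C¹` on all of `ℝ`; the
minimiser turns out positive, so the extension is never seen by the solution. -/
def posPrimitive (g : ℝ → ℝ) (x : ℝ) : ℝ := ∫ t in (0 : ℝ)..x, g (max t 0)

variable {g : ℝ → ℝ}

lemma continuous_comp_max_zero (hg : ContinuousOn g (Set.Ici 0)) :
    Continuous fun t => g (max t 0) :=
  hg.comp_continuous (continuous_id.max continuous_const) fun t =>
    Set.mem_Ici.2 (le_max_right t 0)

lemma hasDerivAt_posPrimitive (hg : ContinuousOn g (Set.Ici 0)) (x : ℝ) :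
    HasDerivAt (posPrimitive g) (g (max x 0)) x :=
  ((continuous_comp_max_zero hg).integral_hasStrictDerivAt 0 x).hasDerivAt

lemma continuous_posPrimitive (hg : ContinuousOn g (Set.Ici 0)) : Continuous (posPrimitive g) :=
  continuous_iff_continuousAt.2 fun x => (hasDerivAt_posPrimitive hg x).continuousAt

lemma monotone_posPrimitive (hg : ContinuousOn g (Set.Ici 0)) (hg0 : ∀ t, 0 ≤ t → 0 ≤ g t) :
    Monotone (posPrimitive g) :=
  monotone_of_hasDerivAt_nonneg (hasDerivAt_posPrimitive hg) fun x => hg0 _ (le_max_right x 0)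

lemma posPrimitive_of_nonneg {x : ℝ} (hx : 0 ≤ x) :
    posPrimitive g x = ∫ t in (0 : ℝ)..x, g t := by
  refine intervalIntegral.integral_congr fun t ht => ?_
  rw [Set.uIcc_of_le hx] at ht
  simp only [max_eq_left ht.1]

lemma hasDerivAt_posPrimitive_affine (hg : ContinuousOn g (Set.Ici 0)) (a c : ℝ) :
    HasDerivAt (fun t => posPrimitive g (a + t * c)) (g (max a 0) * c) 0 := by
  have h := (hasDerivAt_posPrimitive hg (a + 0 * c)).comp (0 : ℝ)
    (((hasDerivAt_id (0 : ℝ)).mul_const c).const_add a)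
  simp only [zero_mul, add_zero, id, one_mul] at h
  exact h

end Primitive

section Extension

variable {T : ℕ}

/-- `v i` sits at index `i + 1`, so that the sequence vanishes at `0` and at `T + 1`. -/
def extendByZero (T : ℕ) (v : Fin T → ℝ) (k : ℕ) : ℝ :=
  if h : 1 ≤ k ∧ k ≤ T then v ⟨k - 1, by omega⟩ else 0

@[simp]
lemma extendByZero_zero (v : Fin T → ℝ) : extendByZero T v 0 = 0 := by simp [extendByZero]

@[simp]
lemma extendByZero_top (v : Fin T → ℝ) : extendByZero T v (T + 1) = 0 := by
  simp [extendByZero]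

@[simp]
lemma extendByZero_succ (v : Fin T → ℝ) (i : Fin T) : extendByZero T v (i + 1) = v i := by
  simp [extendByZero]

lemma extendByZero_of_boundary {u : ℕ → ℝ} (h0 : u 0 = 0) (hT : u (T + 1) = 0) {k : ℕ}
    (hk : k ≤ T + 1) : extendByZero T (fun i => u (i + 1)) k = u k := by
  unfold extendByZero
  split_ifs with h
  · show u (k - 1 + 1) = u k
    congr 1; omega
  · rcases (show k = 0 ∨ k = T + 1 by omega) with rfl | rfl
    exacts [h0.symm, hT.symm]

lemma abs_extendByZero_le (v : Fin T → ℝ) (k : ℕ) : |extendByZero T v k| ≤ ‖v‖ := by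
  unfold extendByZero
  split_ifs
  · exact norm_le_pi_norm v _
  · simp

lemma extendByZero_add_smul (v w : Fin T → ℝ) (t : ℝ) (k : ℕ) :
    extendByZero T (v + t • w) k = extendByZero T v k + t * extendByZero T w k := by
  unfold extendByZero
  split_ifs <;> simp

lemma extendByZero_single (j : Fin T) (k : ℕ) :
    extendByZero T (Pi.single j 1) k = if k = j + 1 then 1 else 0 := by
  unfold extendByZero
  split_ifs with h hk hk
  · rw [Pi.single_apply, if_pos (Fin.ext (by dsimp; omega))]
  · rw [Pi.single_apply, if_neg fun he => hk (by rw [← he]; dsimp; omega)]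
  · have := j.isLt
    omega
  · rfl

@[fun_prop]
lemma continuous_extendByZero (k : ℕ) : Continuous fun v : Fin T → ℝ => extendByZero T v k := by
  unfold extendByZero
  split_ifs
  · exact continuous_apply _
  · exact continuous_const

end Extension

section Energy

variable {T : ℕ} {f : ℕ → ℝ → ℝ} {α : ℝ}

def energy (T : ℕ) (f : ℕ → ℝ → ℝ) (α : ℝ) (v : Fin T → ℝ) : ℝ :=
  (∑ k ∈ range (T + 1), (extendByZero T v (k + 1) - extendByZero T v k) ^ 2) / 2
    - α * ∑ k ∈ Icc 1 T, posPrimitive (f k) (extendByZero T v k)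

lemma continuous_energy (hf_cont : ∀ k ∈ Icc 1 T, ContinuousOn (f k) (Set.Ici 0)) :
    Continuous (energy T f α) := by
  unfold energy
  refine (by fun_prop : Continuous _).sub (continuous_const.mul (continuous_finsetSum _ fun k hk =>
    (continuous_posPrimitive (hf_cont k hk)).comp (continuous_extendByZero k)))

lemma energy_zero : energy T f α 0 = 0 := by
  have h : ∀ k, extendByZero T 0 k = 0 := fun k => by unfold extendByZero; split_ifs <;> rfl
  simp [energy, h, posPrimitive]

lemma norm_sq_le_mul_sum_sq_sub (v : Fin T → ℝ) :
    ‖v‖ ^ 2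
      ≤ (T + 1) * ∑ k ∈ range (T + 1), (extendByZero T v (k + 1) - extendByZero T v k) ^ 2 := by
  rw [← Real.le_sqrt (norm_nonneg v) (by positivity), pi_norm_le_iff_of_nonneg (by positivity)]
  intro i
  refine Real.abs_le_sqrt ?_
  rw [← extendByZero_succ v i]
  exact_mod_cast sq_le_mul_sum_sq_sub (extendByZero_zero v) (by omega : (i : ℕ) + 1 ≤ T + 1)

lemma norm_sq_div_sub_le_energy (hf_cont : ∀ k ∈ Icc 1 T, ContinuousOn (f k) (Set.Ici 0))
    (hf_nonneg : ∀ k ∈ Icc 1 T, ∀ ξ : ℝ, 0 ≤ ξ → 0 ≤ f k ξ) (hα : 0 ≤ α) (v : Fin T → ℝ) :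
    ‖v‖ ^ 2 / (2 * (T + 1)) - α * ∑ k ∈ Icc 1 T, ∫ t in (0 : ℝ)..‖v‖, f k t
      ≤ energy T f α v := by
  have hF : ∑ k ∈ Icc 1 T, posPrimitive (f k) (extendByZero T v k)
      ≤ ∑ k ∈ Icc 1 T, ∫ t in (0 : ℝ)..‖v‖, f k t := by
    refine sum_le_sum fun k hk => ?_
    rw [← posPrimitive_of_nonneg (norm_nonneg v)]
    exact monotone_posPrimitive (hf_cont k hk) (hf_nonneg k hk)
      ((le_abs_self _).trans (abs_extendByZero_le v k))
  have hE : ‖v‖ ^ 2 / (2 * (T + 1))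
      ≤ (∑ k ∈ range (T + 1), (extendByZero T v (k + 1) - extendByZero T v k) ^ 2) / 2 := by
    rw [div_le_iff₀ (by positivity)]
    linarith [norm_sq_le_mul_sum_sq_sub v]
  rw [energy]
  linarith [mul_le_mul_of_nonneg_left hF hα]

lemma tendsto_energy_cocompact (hf_cont : ∀ k ∈ Icc 1 T, ContinuousOn (f k) (Set.Ici 0))
    (hf_nonneg : ∀ k ∈ Icc 1 T, ∀ ξ : ℝ, 0 ≤ ξ → 0 ≤ f k ξ) (hα : 0 ≤ α)
    (hlim : Tendsto (fun ξ : ℝ => (∑ k ∈ Icc 1 T, ∫ t in (0 : ℝ)..ξ, f k t) / ξ ^ 2)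
      atTop (𝓝 0)) :
    Tendsto (energy T f α) (cocompact (Fin T → ℝ)) atTop := by
  set G := fun ξ : ℝ => ∑ k ∈ Icc 1 T, ∫ t in (0 : ℝ)..ξ, f k t
  have hbound : Tendsto (fun r : ℝ => r ^ 2 / (2 * (T + 1)) - α * G r) atTop atTop := by
    have hc : (0 : ℝ) < 1 / (2 * (T + 1)) := by positivity
    have h := (tendsto_pow_atTop two_ne_zero).atTop_mul_pos hc
      (by simpa using (hlim.const_mul α).const_sub (1 / (2 * ((T : ℝ) + 1))))
    refine h.congr' ?_
    filter_upwards [eventually_ne_atTop 0] with r hr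
    simp only [G]
    field_simp
  exact tendsto_atTop_mono (norm_sq_div_sub_le_energy hf_cont hf_nonneg hα)
    (hbound.comp tendsto_norm_cocompact_atTop)

lemma hasDerivAt_energy_add_smul (hf_cont : ∀ k ∈ Icc 1 T, ContinuousOn (f k) (Set.Ici 0))
    (v w : Fin T → ℝ) :
    HasDerivAt (fun t : ℝ => energy T f α (v + t • w))
      (∑ k ∈ range (T + 1), (extendByZero T v (k + 1) - extendByZero T v k)
          * (extendByZero T w (k + 1) - extendByZero T w k)
        - α * ∑ k ∈ Icc 1 T, f k (max (extendByZero T v k) 0) * extendByZero T w k) 0 := by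
  have hsq (a b c d : ℝ) :
      HasDerivAt (fun t : ℝ => (a + t * c - (b + t * d)) ^ 2 / 2) ((a - b) * (c - d)) 0 := by
    have h := ((((hasDerivAt_mul_const (x := (0 : ℝ)) c).const_add a).fun_sub
      ((hasDerivAt_mul_const d).const_add b)).fun_pow 2).div_const 2
    exact h.congr_deriv (by ring)
  simp only [energy, extendByZero_add_smul, sum_div]
  exact (HasDerivAt.fun_sum fun k _ => hsq _ _ _ _).sub <| .const_mul α <|
    HasDerivAt.fun_sum fun k hk => hasDerivAt_posPrimitive_affine (hf_cont k hk) _ _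

variable {v : Fin T → ℝ}

lemma weak_euler_lagrange_of_forall_energy_le
    (hf_cont : ∀ k ∈ Icc 1 T, ContinuousOn (f k) (Set.Ici 0))
    (hmin : ∀ w, energy T f α v ≤ energy T f α w) (w : Fin T → ℝ) :
    ∑ k ∈ range (T + 1), (extendByZero T v (k + 1) - extendByZero T v k)
        * (extendByZero T w (k + 1) - extendByZero T w k)
      = α * ∑ k ∈ Icc 1 T, f k (max (extendByZero T v k) 0) * extendByZero T w k := by
  have hloc : IsLocalMin (fun t : ℝ => energy T f α (v + t • w)) 0 :=
    Eventually.of_forall fun t => by simpa using hmin (v + t • w)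
  linarith [hloc.hasDerivAt_eq_zero (hasDerivAt_energy_add_smul hf_cont v w)]

lemma euler_lagrange_of_forall_energy_le
    (hf_cont : ∀ k ∈ Icc 1 T, ContinuousOn (f k) (Set.Ici 0))
    (hmin : ∀ w, energy T f α v ≤ energy T f α w) {k : ℕ} (hk : k ∈ Icc 1 T) :
    2 * extendByZero T v k - extendByZero T v (k + 1) - extendByZero T v (k - 1)
      = α * f k (max (extendByZero T v k) 0) := by
  have hkT : k - 1 < T := by rw [mem_Icc] at hk; omega
  have hweak := weak_euler_lagrange_of_forall_energy_le hf_cont hmin (Pi.single ⟨k - 1, hkT⟩ 1)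
  rw [sum_range_mul_sub_eq_of_boundary _ (extendByZero_zero _) (extendByZero_top _)] at hweak
  have hk' : k - 1 + 1 = k := by rw [mem_Icc] at hk; omega
  simpa [extendByZero_single, hk', hk] using hweak

end Energy

section FirstEigenvector

lemma two_mul_sin_sub_sin_add_sub_sin_sub (x θ : ℝ) :
    2 * sin x - sin (x + θ) - sin (x - θ) = 4 * sin (θ / 2) ^ 2 * sin x := by
  rw [sin_add, sin_sub, sin_sq_eq_half_sub, mul_div_cancel₀ θ two_ne_zero]
  ring

def firstEigenvector (T k : ℕ) : ℝ := sin (k * π / (T + 1))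

variable {T : ℕ}

@[simp]
lemma firstEigenvector_zero : firstEigenvector T 0 = 0 := by simp [firstEigenvector]

@[simp]
lemma firstEigenvector_top : firstEigenvector T (T + 1) = 0 := by
  rw [firstEigenvector, Nat.cast_add_one, mul_div_cancel_left₀ π (by positivity), sin_pi]

lemma firstEigenvector_pos {k : ℕ} (hk : k ∈ Icc 1 T) : 0 < firstEigenvector T k := by
  rw [mem_Icc] at hk
  have hk' : (k : ℝ) < T + 1 := by exact_mod_cast Nat.lt_succ_of_le hk.2
  have hk0 : (0 : ℝ) < k := by exact_mod_cast hk.1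
  refine sin_pos_of_pos_of_lt_pi (by positivity) ?_
  rw [div_lt_iff₀ (by positivity)]
  nlinarith [pi_pos]

lemma firstEigenvector_le_one (k : ℕ) : firstEigenvector T k ≤ 1 := sin_le_one _

lemma two_mul_firstEigenvector_sub {k : ℕ} (hk : 1 ≤ k) :
    2 * firstEigenvector T k - firstEigenvector T (k + 1) - firstEigenvector T (k - 1)
      = 4 * sin (π / (2 * (T + 1))) ^ 2 * firstEigenvector T k := by
  have hsucc : ((k + 1 : ℕ) : ℝ) * π / (T + 1) = k * π / (T + 1) + π / (T + 1) := by
    push_cast; ring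
  have hpred : ((k - 1 : ℕ) : ℝ) * π / (T + 1) = k * π / (T + 1) - π / (T + 1) := by
    rw [Nat.cast_sub hk]; push_cast; ring
  simp only [firstEigenvector, hsucc, hpred]
  rw [two_mul_sin_sub_sin_add_sub_sin_sub, div_div, mul_comm (T + 1 : ℝ)]

lemma sum_sq_sub_firstEigenvector :
    ∑ k ∈ range (T + 1), (firstEigenvector T (k + 1) - firstEigenvector T k) ^ 2
      = 4 * sin (π / (2 * (T + 1))) ^ 2 * ∑ k ∈ Icc 1 T, firstEigenvector T k ^ 2 := by
  simp only [sq, mul_sum]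
  rw [sum_range_mul_sub_eq_of_boundary _ firstEigenvector_zero firstEigenvector_top]
  refine sum_congr rfl fun k hk => ?_
  rw [two_mul_firstEigenvector_sub (mem_Icc.1 hk).1]
  ring

end FirstEigenvector

section NegativeEnergy

variable {T : ℕ} {f : ℕ → ℝ → ℝ} {α : ℝ}

lemma energy_smul_firstEigenvector_neg (hT : 1 ≤ T) (hα : 0 < α) {c s : ℝ}
    (hcα : 2 * sin (π / (2 * (T + 1))) ^ 2 < α * c) (hs : 0 < s)
    (hF : ∀ k ∈ Icc 1 T,
      c * (s * firstEigenvector T k) ^ 2 < ∫ t in (0 : ℝ)..s * firstEigenvector T k, f k t) :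
    energy T f α (fun i => s * firstEigenvector T (i + 1)) < 0 := by
  set φ := firstEigenvector T
  set S := ∑ k ∈ Icc 1 T, φ k ^ 2
  set u := extendByZero T fun i => s * φ (i + 1)
  have hext : ∀ k ≤ T + 1, u k = s * φ k :=
    fun k => extendByZero_of_boundary (u := fun k => s * φ k) (by simp [φ]) (by simp [φ])
  have hne : (Icc 1 T).Nonempty := nonempty_Icc.2 hT
  have hS : 0 < S := sum_pos (fun k hk => pow_pos (firstEigenvector_pos hk) 2) hne
  have hQ : ∑ k ∈ range (T + 1), (u (k + 1) - u k) ^ 2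
      = s ^ 2 * (4 * sin (π / (2 * (T + 1))) ^ 2 * S) := by
    rw [← sum_sq_sub_firstEigenvector, mul_sum]
    refine sum_congr rfl fun k hk => ?_
    rw [mem_range] at hk
    rw [hext (k + 1) (by omega), hext k (by omega)]
    ring
  have hP : c * s ^ 2 * S < ∑ k ∈ Icc 1 T, posPrimitive (f k) (u k) := by
    rw [mul_sum]
    refine sum_lt_sum_of_nonempty hne fun k hk => ?_
    have hφ := firstEigenvector_pos hk
    rw [hext k (by rw [mem_Icc] at hk; omega), posPrimitive_of_nonneg (by positivity)]
    linarith [hF k hk]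
  calc energy T f α (fun i => s * φ (i + 1))
      < s ^ 2 * (4 * sin (π / (2 * (T + 1))) ^ 2 * S) / 2 - α * (c * s ^ 2 * S) := by
        rw [energy, hQ]; gcongr
    _ = s ^ 2 * S * (2 * sin (π / (2 * (T + 1))) ^ 2 - α * c) := by ring
    _ < 0 := mul_neg_of_pos_of_neg (by positivity) (by linarith)

lemma eventually_mul_sq_lt_integral {g : ℝ → ℝ} (hg : ∀ t, 0 ≤ t → 0 ≤ g t) {c : ℝ}
    (hc : c < liminf (fun ξ : ℝ => (∫ t in (0 : ℝ)..ξ, g t) / ξ ^ 2) (𝓝[>] 0)) :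
    ∀ᶠ ξ in 𝓝[>] 0, c * ξ ^ 2 < ∫ t in (0 : ℝ)..ξ, g t := by
  have hnonneg : ∀ᶠ ξ in 𝓝[>] (0 : ℝ), 0 ≤ (∫ t in (0 : ℝ)..ξ, g t) / ξ ^ 2 :=
    eventually_nhdsWithin_of_forall fun ξ hξ => div_nonneg
      (intervalIntegral.integral_nonneg (le_of_lt hξ) fun t ht => hg t ht.1) (sq_nonneg _)
  filter_upwards [eventually_lt_of_lt_liminf hc (isBoundedUnder_of_eventually_ge hnonneg),
    self_mem_nhdsWithin] with ξ h hξ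
  rwa [lt_div_iff₀ (pow_pos hξ 2)] at h

lemma exists_energy_neg (hT : 1 ≤ T) (hf_nonneg : ∀ k ∈ Icc 1 T, ∀ ξ : ℝ, 0 ≤ ξ → 0 ≤ f k ξ)
    (hα : 0 < α) {c : ℝ} (hcα : 2 * sin (π / (2 * (T + 1))) ^ 2 < α * c)
    (hc : ∀ k ∈ Icc 1 T,
      c < liminf (fun ξ : ℝ => (∫ t in (0 : ℝ)..ξ, f k t) / ξ ^ 2) (𝓝[>] 0)) :
    ∃ w, energy T f α w < 0 := by
  have hev : ∀ᶠ ξ in 𝓝[>] (0 : ℝ), ∀ k ∈ Icc 1 T, c * ξ ^ 2 < ∫ t in (0 : ℝ)..ξ, f k t :=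
    (eventually_all_finset _).2 fun k hk =>
      eventually_mul_sq_lt_integral (hf_nonneg k hk) (hc k hk)
  obtain ⟨δ, hδ, hsub⟩ := mem_nhdsGT_iff_exists_Ioo_subset.1 hev
  have hδ2 : 0 < δ / 2 := half_pos hδ
  refine ⟨_, energy_smul_firstEigenvector_neg hT hα hcα hδ2 fun k hk => hsub ⟨?_, ?_⟩ k hk⟩
  · exact mul_pos hδ2 (firstEigenvector_pos hk)
  · calc δ / 2 * firstEigenvector T k ≤ δ / 2 * 1 := by
          gcongr; exact firstEigenvector_le_one k
      _ < δ := by linarith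

lemma extendByZero_pos_of_forall_energy_le
    (hf_cont : ∀ k ∈ Icc 1 T, ContinuousOn (f k) (Set.Ici 0))
    (hf_nonneg : ∀ k ∈ Icc 1 T, ∀ ξ : ℝ, 0 ≤ ξ → 0 ≤ f k ξ) (hα : 0 ≤ α) {v : Fin T → ℝ}
    (hmin : ∀ w, energy T f α v ≤ energy T f α w) (hneg : energy T f α v < 0) :
    ∀ k ∈ Icc 1 T, 0 < extendByZero T v k := by
  refine pos_of_concave (extendByZero_zero v) (extendByZero_top v) (fun k hk => ?_) ?_
  · have := euler_lagrange_of_forall_energy_le hf_cont hmin hk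
    have := mul_nonneg hα (hf_nonneg k hk _ (le_max_right (extendByZero T v k) 0))
    linarith
  · by_contra! hzero
    have hv : v = 0 := funext fun i => by
      simpa using hzero (i + 1) (mem_Icc.2 ⟨by omega, i.isLt⟩)
    exact hneg.ne (hv ▸ energy_zero)

end NegativeEnergy

end

/-- Theorem `Esistenza3`. Let `T ≥ 2` and `f : ℤ[1,T] × [0,∞) → [0,∞)`
continuous.  Assume `(∑_{k=1}^T ∫_0^ξ f(k,t) dt)/ξ² → 0` as `ξ → +∞` and that
`γ k := liminf_{ξ → 0⁺} (∫_0^ξ f(k,t) dt)/ξ² > 0` for every `k ∈ ℤ[1,T]`.  Then for every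
`α > (2 / min_k γ k) · sin²(π / (2(T+1)))` the second-order discrete problem `(S_α)` has
at least one positive solution. -/
theorem second_order_discrete_existence
    (T : ℕ) (hT : 2 ≤ T)
    (f : ℕ → ℝ → ℝ)
    (hf_cont : ∀ k ∈ Finset.Icc 1 T, ContinuousOn (f k) (Set.Ici 0))
    (hf_nonneg : ∀ k ∈ Finset.Icc 1 T, ∀ ξ : ℝ, 0 ≤ ξ → 0 ≤ f k ξ)
    (γ : ℕ → ℝ)
    (hγ : ∀ k ∈ Finset.Icc 1 T,
      γ k = Filter.liminf (fun ξ : ℝ => (∫ t in (0:ℝ)..ξ, f k t) / ξ ^ 2)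
        (nhdsWithin 0 (Set.Ioi 0)))
    (hγpos : ∀ k ∈ Finset.Icc 1 T, 0 < γ k)
    (hlim : Filter.Tendsto
      (fun ξ : ℝ => (∑ k ∈ Finset.Icc 1 T, ∫ t in (0:ℝ)..ξ, f k t) / ξ ^ 2)
      Filter.atTop (nhds 0))
    (α : ℝ)
    (hα : (2 / ((Finset.Icc 1 T).inf' (Finset.nonempty_Icc.mpr (by omega)) γ)) *
      Real.sin (Real.pi / (2 * ((T : ℝ) + 1))) ^ 2 < α) :
    ∃ u : ℕ → ℝ, u 0 = 0 ∧ u (T + 1) = 0 ∧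
      (∀ k ∈ Finset.Icc 1 T, 0 < u k) ∧
      (∀ k ∈ Finset.Icc 1 T,
        -(u (k + 1) - 2 * u k + u (k - 1)) = α * f k (u k)) := by
  set γmin := (Icc 1 T).inf' (nonempty_Icc.2 (by omega)) γ
  have hγmin : 0 < γmin := (lt_inf'_iff _).2 hγpos
  have hα0 : 0 < α := lt_of_le_of_lt (by positivity) hα
  have hαγ : 2 * sin (π / (2 * (T + 1))) ^ 2 / α < γmin := by
    rw [div_mul_eq_mul_div, div_lt_iff₀ hγmin] at hα
    rw [div_lt_iff₀ hα0]
    linarith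
  obtain ⟨c, hcα, hcγ⟩ := _root_.exists_between hαγ
  obtain ⟨w, hw⟩ := exists_energy_neg (by omega) hf_nonneg hα0 ((div_lt_iff₀' hα0).1 hcα)
    fun k hk => hγ k hk ▸ hcγ.trans_le (inf'_le γ hk)
  obtain ⟨v, hv⟩ := (continuous_energy hf_cont).exists_forall_le
    (tendsto_energy_cocompact hf_cont hf_nonneg hα0.le hlim)
  have hpos :=
    extendByZero_pos_of_forall_energy_le hf_cont hf_nonneg hα0.le hv ((hv w).trans_lt hw)
  refine ⟨extendByZero T v, extendByZero_zero v, extendByZero_top v, hpos, fun k hk => ?_⟩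
  have hEL := euler_lagrange_of_forall_energy_le hf_cont hv hk
  rw [max_eq_left (hpos k hk).le] at hEL
  linarith
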